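/- Let V(r) = r²/2 + r³/3 + A r⁴/4 with A > 0 and let β > 0. Then the equation ∫_ℝ r e^{−θr − βV(r)} dr = 0 admits exactly one real solution θ. -/

import Mathlib

/-! The map `θ ↦ ∫ r e^{-θr - V r} dr` is strictly decreasing, because `θ ↦ r e^{-θr}` is
nonincreasing for every `r` and strictly so for `r ≠ 0`; it is continuous by dominated
convergence, negative for large `θ` and, applying this to `r ↦ V (-r)`, positive for very
negative `θ`. The intermediate value theorem gives the zero. All this only needs
`e^{c|r| - V r}` to be integrable for every `c`, which the quartic term provides for
`V = β Vpot A` through a Gaussian bound. -/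

noncomputable section

open Real

/-- The single-site potential `V(r) = r²/2 + r³/3 + A r⁴/4`. -/
def Vpot (A r : ℝ) : ℝ := r ^ 2 / 2 + r ^ 3 / 3 + A * r ^ 4 / 4

open MeasureTheory Set Filter

def tiltedMoment (V : ℝ → ℝ) (θ : ℝ) : ℝ := ∫ r, r * exp (-θ * r - V r)

section TiltedMoment

variable {V : ℝ → ℝ}

lemma norm_mul_exp_le {θ c : ℝ} (hθ : |θ| ≤ c) (r v : ℝ) :
    ‖r * exp (-θ * r - v)‖ ≤ exp ((c + 1) * |r| - v) := by
  have hr : |r| ≤ exp |r| := by linarith [add_one_le_exp |r|]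
  have hθr : -θ * r ≤ c * |r| := calc
    -θ * r ≤ |θ| * |r| := by rw [← abs_mul]; exact neg_mul θ r ▸ neg_le_abs (θ * r)
    _ ≤ c * |r| := by gcongr
  calc ‖r * exp (-θ * r - v)‖ = |r| * exp (-θ * r - v) := by
        rw [norm_mul, norm_eq_abs, norm_of_nonneg (exp_pos _).le]
    _ ≤ exp |r| * exp (c * |r| - v) := by gcongr
    _ = exp ((c + 1) * |r| - v) := by rw [← exp_add]; ring_nf

lemma integrable_mul_exp (hV : Continuous V)
    (hexp : ∀ c, Integrable fun r => exp (c * |r| - V r)) (θ : ℝ) :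
    Integrable fun r => r * exp (-θ * r - V r) :=
  (hexp (|θ| + 1)).mono' (by fun_prop : Continuous _).aestronglyMeasurable
    (ae_of_all _ fun r => norm_mul_exp_le le_rfl r (V r))

lemma continuous_tiltedMoment (hV : Continuous V)
    (hexp : ∀ c, Integrable fun r => exp (c * |r| - V r)) :
    Continuous (tiltedMoment V) := by
  refine continuous_iff_continuousAt.2 fun θ₀ => ?_
  refine continuousAt_of_dominated (bound := fun r => exp ((|θ₀| + 2) * |r| - V r))
    (Eventually.of_forall fun θ => (integrable_mul_exp hV hexp θ).aestronglyMeasurable) ?_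
    (hexp _) (ae_of_all _ fun r => by fun_prop)
  filter_upwards [Metric.ball_mem_nhds θ₀ one_pos] with θ hθ
  have hθ' : |θ| ≤ |θ₀| + 1 := by
    have := abs_sub_abs_le_abs_sub θ θ₀
    rw [Metric.mem_ball, dist_eq] at hθ
    linarith
  exact ae_of_all _ fun r => by
    simpa only [add_assoc, one_add_one_eq_two] using norm_mul_exp_le hθ' r (V r)

lemma mul_exp_le_of_le {θ₁ θ₂ : ℝ} (h : θ₁ ≤ θ₂) (r v : ℝ) :
    r * exp (-θ₂ * r - v) ≤ r * exp (-θ₁ * r - v) := by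
  rcases le_total 0 r with hr | hr
  · exact mul_le_mul_of_nonneg_left (exp_le_exp.2 (by nlinarith)) hr
  · exact mul_le_mul_of_nonpos_left (exp_le_exp.2 (by nlinarith)) hr

lemma strictAnti_tiltedMoment (hV : Continuous V)
    (hexp : ∀ c, Integrable fun r => exp (c * |r| - V r)) :
    StrictAnti (tiltedMoment V) := by
  intro θ₁ θ₂ h
  have hpos : 0 < ∫ r, (r * exp (-θ₁ * r - V r) - r * exp (-θ₂ * r - V r)) :=
    integral_pos_of_integrable_nonneg_nonzero (x := 1) (by fun_prop)
      ((integrable_mul_exp hV hexp θ₁).sub (integrable_mul_exp hV hexp θ₂))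
      (fun r => sub_nonneg.2 (mul_exp_le_of_le h.le r (V r)))
      (by simp only [one_mul, ne_eq, sub_eq_zero, exp_eq_exp]; linarith)
  rw [integral_sub (integrable_mul_exp hV hexp θ₁) (integrable_mul_exp hV hexp θ₂)] at hpos
  exact sub_pos.1 hpos

lemma mul_exp_le_exp_abs {T : ℝ} (hT : 0 ≤ T) (r v : ℝ) :
    r * exp (-T * r - v) ≤ exp (|r| - v) := by
  rcases le_total r 0 with hr | hr
  · exact (mul_nonpos_of_nonpos_of_nonneg hr (exp_pos _).le).trans (exp_pos _).le
  · calc r * exp (-T * r - v) ≤ exp r * exp (-v) := by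
          gcongr
          · linarith [add_one_le_exp r]
          · nlinarith
      _ = exp (|r| - v) := by rw [abs_of_nonneg hr, ← exp_add, sub_eq_add_neg]

lemma mul_exp_le_neg_exp {T r : ℝ} (hT : 0 ≤ T) (hr : r ≤ -1) (v : ℝ) :
    r * exp (-T * r - v) ≤ -(exp T * exp (-v)) := calc
  r * exp (-T * r - v) ≤ -exp (-T * r - v) := by nlinarith [exp_pos (-T * r - v)]
  _ ≤ -exp (T + -v) := neg_le_neg (exp_le_exp.2 (by nlinarith))
  _ = -(exp T * exp (-v)) := by rw [exp_add]

/-- For large `θ` the mass of `r ↦ e^{-θr - V r}` on `r ≤ -1` grows like `e^θ`, while the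
positive contribution stays bounded by `∫ e^{|r| - V r}`. -/
lemma exists_tiltedMoment_neg (hV : Continuous V)
    (hexp : ∀ c, Integrable fun r => exp (c * |r| - V r)) :
    ∃ θ, tiltedMoment V θ < 0 := by
  have hexpV : Integrable fun r => exp (-V r) := by simpa using hexp 0
  have hexpAbs : Integrable fun r => exp (|r| - V r) := by simpa using hexp 1
  set C := ∫ r, exp (|r| - V r)
  set m := ∫ r in Iic (-1 : ℝ), exp (-V r)
  have hm : 0 < m := by
    have : NeZero (volume.restrict (Iic (-1 : ℝ))) := ⟨by simp⟩
    exact integral_exp_pos hexpV.integrableOn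
  set T := max 0 (C / m)
  have hT : 0 ≤ T := le_max_left _ _
  have hf := integrable_mul_exp hV hexp T
  have hleft : ∫ r in Iic (-1 : ℝ), r * exp (-T * r - V r) ≤ -(exp T * m) := by
    rw [← integral_const_mul, ← integral_neg]
    exact setIntegral_mono_on hf.integrableOn (hexpV.integrableOn.const_mul _).neg
      measurableSet_Iic fun r hr => mul_exp_le_neg_exp hT hr (V r)
  have hright : ∫ r in Ioi (-1 : ℝ), r * exp (-T * r - V r) ≤ C := calc
    _ ≤ ∫ r in Ioi (-1 : ℝ), exp (|r| - V r) :=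
        setIntegral_mono hf.integrableOn hexpAbs.integrableOn
          fun r => mul_exp_le_exp_abs hT r (V r)
    _ ≤ C := setIntegral_le_integral hexpAbs (ae_of_all _ fun r => (exp_pos _).le)
  have hC : C < exp T * m := by
    rw [← div_lt_iff₀ hm]
    linarith [le_max_right 0 (C / m), add_one_le_exp T]
  refine ⟨T, ?_⟩
  rw [tiltedMoment, ← intervalIntegral.integral_Iic_add_Ioi hf.integrableOn hf.integrableOn]
  linarith

lemma tiltedMoment_neg (θ : ℝ) :
    tiltedMoment V (-θ) = -tiltedMoment (fun r => V (-r)) θ := by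
  rw [tiltedMoment, tiltedMoment, ← integral_neg, ← integral_neg_eq_self]
  congr 1 with r
  ring_nf

lemma exists_tiltedMoment_pos (hV : Continuous V)
    (hexp : ∀ c, Integrable fun r => exp (c * |r| - V r)) :
    ∃ θ, 0 < tiltedMoment V θ := by
  obtain ⟨θ, hθ⟩ := exists_tiltedMoment_neg (V := fun r => V (-r)) (by fun_prop)
    fun c => by simpa only [abs_neg] using (hexp c).comp_neg
  exact ⟨-θ, by rw [tiltedMoment_neg]; linarith⟩

theorem existsUnique_tiltedMoment_eq_zero (hV : Continuous V)
    (hexp : ∀ c, Integrable fun r => exp (c * |r| - V r)) :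
    ∃! θ, tiltedMoment V θ = 0 := by
  obtain ⟨a, ha⟩ := exists_tiltedMoment_neg hV hexp
  obtain ⟨b, hb⟩ := exists_tiltedMoment_pos hV hexp
  obtain ⟨θ, hθ⟩ := intermediate_value_univ a b (continuous_tiltedMoment hV hexp)
    ⟨ha.le, hb.le⟩
  exact ⟨θ, hθ, fun θ' hθ' => (strictAnti_tiltedMoment hV hexp).injective (hθ'.trans hθ.symm)⟩

end TiltedMoment

lemma exists_le_add_mul_pow_four {a b : ℝ} (ha : 0 ≤ a) (hb : 0 < b) :
    ∃ K, ∀ x, 0 ≤ x → a * (x + x ^ 2 + x ^ 3) ≤ K + b * x ^ 4 := by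
  set R := max 1 (3 * a / b)
  have hR : 1 ≤ R := le_max_left _ _
  refine ⟨3 * a * R ^ 3, fun x hx => ?_⟩
  rcases le_total x R with hxR | hRx
  · have h1 : x ≤ R ^ 3 := hxR.trans (le_self_pow₀ hR (by norm_num))
    have h2 : x ^ 2 ≤ R ^ 3 :=
      (pow_le_pow_left₀ hx hxR 2).trans (pow_le_pow_right₀ hR (by norm_num))
    have h3 : x ^ 3 ≤ R ^ 3 := pow_le_pow_left₀ hx hxR 3
    nlinarith [pow_nonneg hx 4]
  · have hx1 : 1 ≤ x := hR.trans hRx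
    have hab : 3 * a ≤ b * x := by
      rw [← div_le_iff₀' hb]; exact (le_max_right _ _).trans hRx
    have h1 : x ≤ x ^ 3 := le_self_pow₀ hx1 (by norm_num)
    have h2 : x ^ 2 ≤ x ^ 3 := pow_le_pow_right₀ hx1 (by norm_num)
    nlinarith [pow_nonneg hx 3, pow_nonneg (by positivity : (0:ℝ) ≤ R) 3]

lemma exists_mul_abs_add_sq_sub_Vpot_le {A β : ℝ} (hA : 0 < A) (hβ : 0 < β) (c : ℝ) :
    ∃ K, ∀ r, c * |r| + r ^ 2 - β * Vpot A r ≤ K := by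
  obtain ⟨K, hK⟩ := exists_le_add_mul_pow_four (a := |c| + 1 + β) (by positivity)
    (by positivity : 0 < β * A / 4)
  refine ⟨K, fun r => ?_⟩
  have hx := hK |r| (abs_nonneg r)
  have hr2 : |r| ^ 2 = r ^ 2 := sq_abs r
  have hr4 : |r| ^ 4 = r ^ 4 := by rw [← abs_pow]; exact abs_of_nonneg (by positivity)
  have hr3 : -r ^ 3 ≤ |r| ^ 3 := by rw [← abs_pow]; exact neg_le_abs _
  rw [hr2, hr4] at hx
  have hc : c * |r| ≤ |c| * |r| := mul_le_mul_of_nonneg_right (le_abs_self c) (abs_nonneg r)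
  unfold Vpot
  nlinarith [abs_nonneg r, abs_nonneg c, pow_nonneg (abs_nonneg r) 3, sq_nonneg r,
    mul_le_mul_of_nonneg_left hr3 hβ.le]

lemma integrable_exp_mul_abs_sub_Vpot {A β : ℝ} (hA : 0 < A) (hβ : 0 < β) (c : ℝ) :
    Integrable fun r => exp (c * |r| - β * Vpot A r) := by
  obtain ⟨K, hK⟩ := exists_mul_abs_add_sq_sub_Vpot_le hA hβ c
  refine ((integrable_exp_neg_mul_sq one_pos).const_mul (exp K)).mono'
    (by unfold Vpot; fun_prop : Continuous _).aestronglyMeasurable (ae_of_all _ fun r => ?_)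
  rw [norm_of_nonneg (exp_pos _).le, ← exp_add]
  exact exp_le_exp.2 (by linarith [hK r])

/-- the equation `∫ r e^{−θr − βV(r)} dr = 0` has exactly one real
solution `θ`. -/
theorem stmt14 (A β : ℝ) (hA : 0 < A) (hβ : 0 < β) :
    ∃! θ : ℝ, (∫ r : ℝ, r * Real.exp (-θ * r - β * Vpot A r)) = 0 :=
  existsUnique_tiltedMoment_eq_zero (V := fun r => β * Vpot A r) (by unfold Vpot; fun_prop)
    (integrable_exp_mul_abs_sub_Vpot hA hβ)

end
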